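/- Let M ∈ L₂(H₁,H₄) be Hilbert–Schmidt, B ∈ B(H₃,H₄), C ∈ B(H₁,H₂), with ran(M) ⊆ dom(B†). If λ ≠ 0 is an eigenvalue of T := P_{cl ran B} M C†C M* P_{cl ran B} (as an operator on H₄), then λ is an eigenvalue of B† M C†C M* B (on H₃), and conversely. -/

import Mathlib

open scoped InnerProductSpace
open ContinuousLinearMap
noncomputable section

/-- Orthogonal projection onto the closure of the range of a bounded operator. -/
noncomputable def projClosureRan {E F : Type*}
    [NormedAddCommGroup E] [InnerProductSpace ℝ E] [CompleteSpace E]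
    [NormedAddCommGroup F] [InnerProductSpace ℝ F] [CompleteSpace F]
    (C : E →L[ℝ] F) : F →L[ℝ] F :=
  letI : CompleteSpace ((LinearMap.range (C : E →ₗ[ℝ] F)).topologicalClosure) :=
    (Submodule.isClosed_topologicalClosure _).completeSpace_coe
  ((LinearMap.range (C : E →ₗ[ℝ] F)).topologicalClosure).subtypeL ∘L
    Submodule.orthogonalProjectionOnto ((LinearMap.range (C : E →ₗ[ℝ] F)).topologicalClosure)

/-- Orthogonal projection onto `(ker C)ᗮ` (this is C†C). -/
noncomputable def projKerPerp {E F : Type*}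
    [NormedAddCommGroup E] [InnerProductSpace ℝ E] [CompleteSpace E]
    [NormedAddCommGroup F] [InnerProductSpace ℝ F] [CompleteSpace F]
    (C : E →L[ℝ] F) : E →L[ℝ] E :=
  letI : CompleteSpace ((LinearMap.ker (C : E →ₗ[ℝ] F))ᗮ : Submodule ℝ E) :=
    (Submodule.isClosed_orthogonal _).completeSpace_coe
  ((LinearMap.ker (C : E →ₗ[ℝ] F))ᗮ).subtypeL ∘L
    Submodule.orthogonalProjectionOnto ((LinearMap.ker (C : E →ₗ[ℝ] F))ᗮ)

/-- `Bd` is the Moore–Penrose inverse of the bounded operator `B`. -/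
structure IsMPInv {E F : Type*}
    [NormedAddCommGroup E] [InnerProductSpace ℝ E] [CompleteSpace E]
    [NormedAddCommGroup F] [InnerProductSpace ℝ F] [CompleteSpace F]
    (B : E →L[ℝ] F) (Bd : F →ₗ.[ℝ] E) : Prop where
  dom_eq : Bd.domain = LinearMap.range (B : E →ₗ[ℝ] F) ⊔ (LinearMap.range (B : E →ₗ[ℝ] F))ᗮ
  mem_ran : ∀ x : E, B x ∈ Bd.domain
  val_mem : ∀ k (hk : k ∈ Bd.domain), Bd ⟨k, hk⟩ ∈ (LinearMap.ker (B : E →ₗ[ℝ] F))ᗮ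
  map_val : ∀ k (hk : k ∈ Bd.domain), B (Bd ⟨k, hk⟩) = projClosureRan B k

lemma projClosureRan_idem {E F : Type*}
    [NormedAddCommGroup E] [InnerProductSpace ℝ E] [CompleteSpace E]
    [NormedAddCommGroup F] [InnerProductSpace ℝ F] [CompleteSpace F]
    (B : E →L[ℝ] F) (x : F) :
    projClosureRan B (projClosureRan B x) = projClosureRan B x := by
  letI : CompleteSpace ((LinearMap.range (B : E →ₗ[ℝ] F)).topologicalClosure) :=
    (Submodule.isClosed_topologicalClosure _).completeSpace_coe
  simp only [projClosureRan, ContinuousLinearMap.comp_apply, Submodule.subtypeL_apply]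
  rw [Submodule.orthogonalProjectionOnto_mem_subspace_eq_self]

lemma projClosureRan_eq_self {E F : Type*}
    [NormedAddCommGroup E] [InnerProductSpace ℝ E] [CompleteSpace E]
    [NormedAddCommGroup F] [InnerProductSpace ℝ F] [CompleteSpace F]
    (B : E →L[ℝ] F) (x : F) (hx : x ∈ (LinearMap.range (B : E →ₗ[ℝ] F)).topologicalClosure) :
    projClosureRan B x = x := by
  letI : CompleteSpace ((LinearMap.range (B : E →ₗ[ℝ] F)).topologicalClosure) :=
    (Submodule.isClosed_topologicalClosure _).completeSpace_coe
  simp only [projClosureRan, ContinuousLinearMap.comp_apply, Submodule.subtypeL_apply]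
  exact Submodule.starProjection_eq_self_iff.2 hx

/-- Let M ∈ L₂(H₁,H₄) be Hilbert–Schmidt, B ∈ B(H₃,H₄), C ∈ B(H₁,H₂), with
ran(M) ⊆ dom(B†).  If λ ≠ 0 is an eigenvalue of
T := P_{cl ran B} M C†C M* P_{cl ran B} on H₄ (here C†C = P_{ker C ⊥}), then λ is an
eigenvalue of B† M C†C M* B on H₃, and conversely. -/
theorem stmt15 {H₁ H₂ H₃ H₄ : Type*}
    [NormedAddCommGroup H₁] [InnerProductSpace ℝ H₁] [CompleteSpace H₁]
    [NormedAddCommGroup H₂] [InnerProductSpace ℝ H₂] [CompleteSpace H₂]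
    [NormedAddCommGroup H₃] [InnerProductSpace ℝ H₃] [CompleteSpace H₃]
    [NormedAddCommGroup H₄] [InnerProductSpace ℝ H₄] [CompleteSpace H₄]
    {ι : Type*} (e : HilbertBasis ι ℝ H₁)
    (M : H₁ →L[ℝ] H₄) (B : H₃ →L[ℝ] H₄) (C : H₁ →L[ℝ] H₂)
    (hMHS : Summable fun i => ‖M (e i)‖ ^ 2)
    (Bd : H₄ →ₗ.[ℝ] H₃) (hB : IsMPInv B Bd)
    (hMdom : ∀ x : H₁, M x ∈ Bd.domain)
    (lam : ℝ) (hlam : lam ≠ 0) :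
    (∃ v : H₄, v ≠ 0 ∧
        projClosureRan B (M (projKerPerp C ((ContinuousLinearMap.adjoint M)
          (projClosureRan B v)))) = lam • v) ↔
      (∃ w : H₃, w ≠ 0 ∧
        Bd ⟨M (projKerPerp C ((ContinuousLinearMap.adjoint M) (B w))), hMdom _⟩ = lam • w) := by
  set P := projClosureRan B with hP
  set Q := projKerPerp C with hQ
  constructor
  · rintro ⟨v, hv0, hv⟩
    have hPv : P v = v := by
      have h1 : P (P (M (Q ((ContinuousLinearMap.adjoint M) (P v))))) =
          P (M (Q ((ContinuousLinearMap.adjoint M) (P v)))) := projClosureRan_idem B _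
      have h2 : P (lam • v) = lam • v := by rw [← hv]; exact h1
      have h3 : lam • P v = lam • v := by rw [← map_smul]; exact h2
      exact smul_right_injective _ hlam h3
    rw [hPv] at hv
    set k := M (Q ((ContinuousLinearMap.adjoint M) v)) with hk
    refine ⟨Bd ⟨k, hMdom _⟩, ?_, ?_⟩
    · intro h0
      have hBw : B (Bd ⟨k, hMdom _⟩) = P k := hB.map_val _ _
      rw [h0, map_zero] at hBw
      rw [hv] at hBw
      exact hv0 ((smul_eq_zero.1 hBw.symm).resolve_left hlam)
    · have hBw : B (Bd ⟨k, hMdom _⟩) = lam • v := by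
        rw [hB.map_val]; exact hv
      have harg : M (Q ((ContinuousLinearMap.adjoint M) (B (Bd ⟨k, hMdom _⟩)))) = lam • k := by
        rw [hBw, map_smul, map_smul, map_smul]
      have hmem : (⟨M (Q ((ContinuousLinearMap.adjoint M) (B (Bd ⟨k, hMdom _⟩)))), hMdom _⟩ :
          Bd.domain) = lam • ⟨k, hMdom _⟩ := Subtype.ext harg
      rw [hmem, Bd.map_smul]
  · rintro ⟨w, hw0, hw⟩
    have hBw0 : B w ≠ 0 := by
      intro h0
      apply hw0
      have : (⟨M (Q ((ContinuousLinearMap.adjoint M) (B w))), hMdom _⟩ : Bd.domain) = 0 := by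
        apply Subtype.ext; simp [h0]
      rw [this, Bd.map_zero] at hw
      exact (smul_eq_zero.1 hw.symm).resolve_left hlam
    refine ⟨B w, hBw0, ?_⟩
    have hPBw : P (B w) = B w :=
      projClosureRan_eq_self B _ (Submodule.le_topologicalClosure _ ⟨w, rfl⟩)
    rw [hPBw, ← hB.map_val _ (hMdom _), hw, map_smul]
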